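/- arXiv:2605.08705 — 5 statements merged into one kernel-verified Lean document; each statement's English description precedes it below -/
import Mathlib

section
/- For all real numbers a, b ≥ 0 (with conventions 0·log 0 = 0 and a·log(a/0) = +∞ for a > 0), the inequality a·log(a/b) − a + b ≥ (√a − √b)² holds. -/
/-- Square-root lower bound on the KL integrand: for `a, b ≥ 0`,
`a·log(a/b) − a + b ≥ (√a − √b)²`.  The convention `a·log(a/0) = +∞` for
`a > 0` makes that case trivially true, so it is recorded by the
hypothesis `0 < b ∨ a = 0` (the case `a = b = 0` uses `0·log 0 = 0`,
which agrees with Lean's `Real.log 0 = 0`). -/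
theorem stmt0 (a b : ℝ) (ha : 0 ≤ a) (hb : 0 ≤ b) (hconv : 0 < b ∨ a = 0) :
    (Real.sqrt a - Real.sqrt b) ^ 2 ≤ a * Real.log (a / b) - a + b := by
  rcases eq_or_lt_of_le ha with h0 | ha'
  · rw [← h0]
    simp [Real.sq_sqrt hb]
  · have hb' : 0 < b := hconv.resolve_right ha'.ne'
    have hsa : 0 < Real.sqrt a := Real.sqrt_pos.mpr ha'
    have hsb : 0 < Real.sqrt b := Real.sqrt_pos.mpr hb'
    have hsa2 : Real.sqrt a ^ 2 = a := Real.sq_sqrt ha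
    have hsb2 : Real.sqrt b ^ 2 = b := Real.sq_sqrt hb
    have h1 : Real.log (Real.sqrt b / Real.sqrt a) ≤ Real.sqrt b / Real.sqrt a - 1 :=
      Real.log_le_sub_one_of_pos (by positivity)
    have h2 : Real.log (Real.sqrt b / Real.sqrt a) = (Real.log b - Real.log a) / 2 := by
      rw [Real.log_div hsb.ne' hsa.ne', Real.log_sqrt hb, Real.log_sqrt ha]; ring
    have h3 : Real.log (a / b) = Real.log a - Real.log b := Real.log_div ha'.ne' hb'.ne'
    have hmul : a * (Real.sqrt b / Real.sqrt a) = Real.sqrt a * Real.sqrt b := by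
      rw [mul_comm, div_mul_eq_mul_div, div_eq_iff hsa.ne']; linear_combination -Real.sqrt b * hsa2
    have h5 : 2 * a - 2 * (Real.sqrt a * Real.sqrt b) ≤ a * Real.log (a / b) := by
      have := mul_le_mul_of_nonneg_left h1 ha
      rw [h2, mul_sub, hmul, mul_one] at this
      rw [h3]
      nlinarith [this]
    nlinarith [h5]
end

section
/- For all real numbers u, v ≥ 0 (with the convention 0·log 0 = 0), the inequality u·log(u/v) − u + v ≥ (u − v)²/(2(u + v)) holds, where the left side is +∞ if v = 0 < u and the right side is interpreted as 0 if u = v = 0. -/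
/-!
Both sides are compared with the squared Hellinger term `(√u - √v)²`. From `log x ≤ x - 1` at
`x = √(v/u)` one gets `u log(u/v) ≥ 2u - 2√u√v`, i.e. the Kullback–Leibler term dominates
`(√u - √v)²`; and `(u - v)² = (√u - √v)²(√u + √v)² ≤ (√u - √v)² · 2(u + v)`.
-/

open Real

lemma two_mul_sub_two_mul_sqrt_mul_sqrt_le_mul_log_div {u v : ℝ} (hu : 0 < u) (hv : 0 < v) :
    2 * u - 2 * (√u * √v) ≤ u * log (u / v) := by
  have hlog : log (v / u) ≤ 2 * (√(v / u) - 1) := by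
    have := log_le_sub_one_of_pos (sqrt_pos.2 (div_pos hv hu))
    rw [log_sqrt (div_pos hv hu).le] at this
    linarith
  have hsqrt : u * √(v / u) = √u * √v := by
    rw [sqrt_div' _ hu.le, mul_div_assoc', div_eq_iff (sqrt_pos.2 hu).ne']
    linear_combination -√v * mul_self_sqrt hu.le
  have hflip : log (u / v) = -log (v / u) := by rw [← log_inv, inv_div]
  nlinarith

lemma sq_sqrt_sub_sqrt_le_mul_log_div_sub_add {u v : ℝ} (hu : 0 ≤ u) (hv : 0 < v) :
    (√u - √v) ^ 2 ≤ u * log (u / v) - u + v := by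
  rcases hu.eq_or_lt with rfl | hu
  · simp [sq_sqrt hv.le]
  · have := two_mul_sub_two_mul_sqrt_mul_sqrt_le_mul_log_div hu hv
    nlinarith [sq_sqrt hu.le, sq_sqrt hv.le]

lemma sq_sub_div_le_sq_sqrt_sub_sqrt {u v : ℝ} (hu : 0 ≤ u) (hv : 0 ≤ v) :
    (u - v) ^ 2 / (2 * (u + v)) ≤ (√u - √v) ^ 2 := by
  rcases (add_nonneg hu hv).eq_or_lt with h | h
  · rw [← h, mul_zero, div_zero]
    positivity
  · have hfactor : (u - v) ^ 2 = (√u - √v) ^ 2 * (√u + √v) ^ 2 := by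
      rw [← mul_pow, mul_comm, ← sq_sub_sq, sq_sqrt hu, sq_sqrt hv]
    have hsum : (√u + √v) ^ 2 ≤ 2 * (u + v) := by
      nlinarith [sq_nonneg (√u - √v), sq_sqrt hu, sq_sqrt hv]
    rw [div_le_iff₀ (by positivity), hfactor]
    exact mul_le_mul_of_nonneg_left hsum (sq_nonneg _)

/-- `hconv` excludes the case `v = 0 < u`, where the left side is `+∞` in the informal statement. -/
theorem stmt2 (u v : ℝ) (hu : 0 ≤ u) (hv : 0 ≤ v) (hconv : 0 < v ∨ u = 0) :
    (u - v) ^ 2 / (2 * (u + v)) ≤ u * Real.log (u / v) - u + v := by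
  rcases hconv with hv' | rfl
  · exact (sq_sub_div_le_sq_sqrt_sub_sqrt hu hv).trans
      (sq_sqrt_sub_sqrt_le_mul_log_div_sub_add hu hv')
  · simpa [sq_sqrt hv] using sq_sub_div_le_sq_sqrt_sub_sqrt le_rfl hv
end

section
/- Let η, σ be finite positive measures on a bounded domain Ω with total masses A = η(Ω) > 0 and B = σ(Ω) > 0. Let γ be a nonnegative measure on Ω × Ω whose KL penalties satisfy KL(γ₀ | η) + KL(γ₁ | σ) ≤ A + B, where γ₀, γ₁ are the marginals of γ. Then the total mass s = γ(Ω × Ω) satisfies s ≤ e·√(A·B). -/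
open MeasureTheory

/-- Unnormalized (generalized) Kullback–Leibler divergence between finite
positive measures: `KLu ρ η = ∫ (f log f − f + 1) dη` with `f = dρ/dη`. -/
noncomputable def KLu {X : Type*} [MeasurableSpace X] (ρ η : Measure X) : ℝ :=
  ∫ x, ((ρ.rnDeriv η x).toReal * Real.log (ρ.rnDeriv η x).toReal
        - (ρ.rnDeriv η x).toReal + 1) ∂η

/-!
Jensen's inequality for the convex function `klFun t = t log t - t + 1` bounds each penalty from
below by its value on the constant density: with `A = η(Ω)`, `B = σ(Ω)` and `s = γ(Ω × Ω)`,
`KL(γ₀ | η) ≥ A · klFun (s / A) = s log (s / A) - s + A`, and likewise for `γ₁`. Adding the two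
bounds, the hypothesis becomes `s (log (s² / (A B)) - 2) ≤ 0`, i.e. `s² ≤ e² A B`.
-/

open Real InformationTheory

lemma klFun_eq_mul_log_sub_add_one (t : ℝ) : klFun t = t * log t - t + 1 := by
  rw [klFun_apply]; ring

lemma KLu_eq_integral_klFun {X : Type*} [MeasurableSpace X] (ρ η : Measure X) :
    KLu ρ η = ∫ x, klFun (ρ.rnDeriv η x).toReal ∂η := by
  simp only [KLu, klFun_eq_mul_log_sub_add_one]

lemma mul_klFun_div_le_KLu {X : Type*} [MeasurableSpace X] (ρ η : Measure X)
    [IsFiniteMeasure ρ] [IsFiniteMeasure η] (hρη : ρ ≪ η)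
    (hint : Integrable (fun x ↦ klFun (ρ.rnDeriv η x).toReal) η) :
    η.real Set.univ * klFun (ρ.real Set.univ / η.real Set.univ) ≤ KLu ρ η := by
  rcases eq_zero_or_neZero η with rfl | _
  · simp [KLu]
  have jensen := convexOn_klFun.map_average_le continuous_klFun.continuousOn isClosed_Ici
    (ae_of_all _ fun _ ↦ ENNReal.toReal_nonneg) Measure.integrable_toReal_rnDeriv hint
  rw [average_eq, average_eq, Measure.integral_toReal_rnDeriv hρη, ← KLu_eq_integral_klFun,
    smul_eq_mul, smul_eq_mul, inv_mul_eq_div, inv_mul_eq_div,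
    le_div_iff₀ measureReal_univ_pos] at jensen
  linarith

lemma le_exp_one_mul_sqrt_of_mul_klFun_add_mul_klFun_le {s A B : ℝ} (hs : 0 ≤ s) (hA : 0 < A)
    (hB : 0 < B) (h : A * klFun (s / A) + B * klFun (s / B) ≤ A + B) :
    s ≤ exp 1 * √(A * B) := by
  rcases hs.eq_or_lt with rfl | hs_pos
  · positivity
  have hmass (C : ℝ) (hC : 0 < C) : C * klFun (s / C) = s * log (s / C) - s + C := by
    rw [klFun_eq_mul_log_sub_add_one, mul_add, mul_sub, ← mul_assoc, mul_div_cancel₀ s hC.ne']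
    ring
  have hlog : log (s ^ 2 / (A * B)) ≤ 2 := by
    have hsum : s * (log (s / A) + log (s / B)) ≤ s * 2 := by
      rw [hmass A hA, hmass B hB] at h; linarith
    rw [← log_mul (by positivity) (by positivity)] at hsum
    rw [show s ^ 2 / (A * B) = s / A * (s / B) by ring]
    exact le_of_mul_le_mul_left hsum hs_pos
  have hsq : s ^ 2 ≤ (exp 1) ^ 2 * (A * B) := by
    rw [exp_one_pow, ← div_le_iff₀ (by positivity), ← log_le_iff_le_exp (by positivity)]
    exact_mod_cast hlog
  rw [← sqrt_sq (exp_pos 1).le, ← sqrt_mul (by positivity)]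
  exact le_sqrt_of_sq_le hsq

/-- Mass bound for unbalanced transport plans: if `η, σ` are finite positive
measures with total masses `A, B > 0` and `γ` is a nonnegative measure on
the product space whose marginals satisfy `KL(γ₀ | η) + KL(γ₁ | σ) ≤ A + B`,
then the total mass `s = γ(Ω × Ω)` satisfies `s ≤ e·√(A·B)`. -/
theorem stmt6 {X : Type*} [MeasurableSpace X]
    (η σ : Measure X) [IsFiniteMeasure η] [IsFiniteMeasure σ]
    (γ : Measure (X × X)) [IsFiniteMeasure γ]
    (hA : 0 < (η Set.univ).toReal) (hB : 0 < (σ Set.univ).toReal)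
    (h0ac : γ.map Prod.fst ≪ η) (h1ac : γ.map Prod.snd ≪ σ)
    (h0int : Integrable (fun x =>
      ((γ.map Prod.fst).rnDeriv η x).toReal
          * Real.log ((γ.map Prod.fst).rnDeriv η x).toReal
        - ((γ.map Prod.fst).rnDeriv η x).toReal + 1) η)
    (h1int : Integrable (fun y =>
      ((γ.map Prod.snd).rnDeriv σ y).toReal
          * Real.log ((γ.map Prod.snd).rnDeriv σ y).toReal
        - ((γ.map Prod.snd).rnDeriv σ y).toReal + 1) σ)
    (hKL : KLu (γ.map Prod.fst) η + KLu (γ.map Prod.snd) σ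
        ≤ (η Set.univ).toReal + (σ Set.univ).toReal) :
    (γ Set.univ).toReal
      ≤ Real.exp 1 * Real.sqrt ((η Set.univ).toReal * (σ Set.univ).toReal) := by
  have h0 := mul_klFun_div_le_KLu _ η h0ac (by simpa only [klFun_eq_mul_log_sub_add_one])
  have h1 := mul_klFun_div_le_KLu _ σ h1ac (by simpa only [klFun_eq_mul_log_sub_add_one])
  rw [map_measureReal_apply measurable_fst .univ, Set.preimage_univ] at h0
  rw [map_measureReal_apply measurable_snd .univ, Set.preimage_univ] at h1
  exact le_exp_one_mul_sqrt_of_mul_klFun_add_mul_klFun_le ENNReal.toReal_nonneg hA hB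
    (by simp only [Measure.real] at h0 h1; linarith)
end

section
/- Let r, r* ∈ ℝ₊ⁿ be nonnegative vectors and b ∈ [0, C_Ω]ⁿ with components bᵢ ∈ [0, C_Ω]. Set KL(r|r*) = Σᵢ [rᵢ log(rᵢ/rᵢ*) − rᵢ + rᵢ*]. Then Σᵢ rᵢ* bᵢ ≤ 3·Σᵢ rᵢ bᵢ + 2·C_Ω·KL(r | r*). -/
/-!
Termwise, with `t = rᵢ / rᵢ*`, the summand `rᵢ log (rᵢ/rᵢ*) - rᵢ + rᵢ*` is `rᵢ* · klFun t`, and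
`klFun t ≥ (√t - 1)²` (from `log √t ≥ 1 - 1/√t`). Hence `2 klFun t ≥ 1 - 3t`, since the difference
is at least `(2√t - 1)² + t`. Multiplying the positive part of `1 - 3t` by `bᵢ ≤ C_Ω` and the
negative part by `bᵢ ≥ 0` gives the claim summand by summand.
-/

open Real InformationTheory

lemma sq_sqrt_sub_one_le_klFun {x : ℝ} (hx : 0 ≤ x) : (√x - 1) ^ 2 ≤ klFun x := by
  rcases hx.eq_or_lt with rfl | hx
  · simp [klFun_zero]
  have hs : 0 < √x := sqrt_pos.2 hx
  have hlog : 2 * (1 - (√x)⁻¹) ≤ log x := by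
    linarith [one_sub_inv_le_log_of_pos hs, log_sqrt hx.le]
  have hx_log : 2 * x - 2 * √x ≤ x * log x := by
    calc 2 * x - 2 * √x = x * (2 * (1 - (√x)⁻¹)) := by
          linear_combination 2 * div_sqrt (x := x)
      _ ≤ x * log x := mul_le_mul_of_nonneg_left hlog hx.le
  rw [klFun_apply]
  nlinarith [sq_sqrt hx.le]

lemma one_sub_three_mul_le_two_mul_klFun {x : ℝ} (hx : 0 ≤ x) : 1 - 3 * x ≤ 2 * klFun x := by
  nlinarith [sq_sqrt_sub_one_le_klFun hx, sq_sqrt hx, sq_nonneg (2 * √x - 1)]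

lemma mul_one_sub_three_mul_le_two_mul_klFun {t β C : ℝ} (ht : 0 ≤ t) (hβ : 0 ≤ β)
    (hβC : β ≤ C) : β * (1 - 3 * t) ≤ 2 * C * klFun t := by
  have hkl := one_sub_three_mul_le_two_mul_klFun ht
  rcases le_total (1 - 3 * t) 0 with h | h
  · nlinarith [klFun_nonneg ht]
  · nlinarith [mul_le_mul hβC hkl h (hβ.trans hβC)]

lemma mul_log_div_sub_add_eq_mul_klFun (u : ℝ) {v : ℝ} (hv : 0 < v) :
    u * log (u / v) - u + v = v * klFun (u / v) := by
  rw [klFun_apply]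
  field_simp
  ring

lemma mul_le_three_mul_add_two_mul_log_div_sub_add {u v β C : ℝ} (hu : 0 ≤ u) (hv : 0 ≤ v)
    (huv : 0 < v ∨ u = 0) (hβ : 0 ≤ β) (hβC : β ≤ C) :
    v * β ≤ 3 * (u * β) + 2 * C * (u * log (u / v) - u + v) := by
  rcases huv with hv | rfl
  · have key := mul_one_sub_three_mul_le_two_mul_klFun (div_nonneg hu hv.le) hβ hβC
    have hu_eq : v * (u / v) = u := mul_div_cancel₀ u hv.ne'
    rw [mul_log_div_sub_add_eq_mul_klFun u hv]
    nlinarith [mul_le_mul_of_nonneg_left key hv.le]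
  · simp only [zero_mul, zero_sub, zero_add, mul_zero]
    nlinarith

theorem stmt11_general {n : ℕ} (CΩ : ℝ)
    (r rs b : Fin n → ℝ)
    (hr : ∀ i, 0 ≤ r i) (hrs : ∀ i, 0 ≤ rs i)
    (hconv : ∀ i, 0 < rs i ∨ r i = 0)
    (hb : ∀ i, 0 ≤ b i ∧ b i ≤ CΩ) :
    ∑ i, rs i * b i
      ≤ 3 * ∑ i, r i * b i
        + 2 * CΩ * ∑ i, (r i * Real.log (r i / rs i) - r i + rs i) := by
  rw [Finset.mul_sum, Finset.mul_sum, ← Finset.sum_add_distrib]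
  exact Finset.sum_le_sum fun i _ ↦
    mul_le_three_mul_add_two_mul_log_div_sub_add (hr i) (hrs i) (hconv i) (hb i).1 (hb i).2

/-- Weighted-Pinsker transfer lemma: for nonnegative vectors `r, r*` and
weights `b` with `0 ≤ bᵢ ≤ C_Ω`, with the discrete unnormalized KL
divergence `KL(r | r*) = Σᵢ [rᵢ log(rᵢ/rᵢ*) − rᵢ + rᵢ*]`, one has
`Σᵢ rᵢ* bᵢ ≤ 3·Σᵢ rᵢ bᵢ + 2·C_Ω·KL(r | r*)`.  (The hypothesis
`0 < rᵢ* ∨ rᵢ = 0` records the convention that `KL` is `+∞` when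
`rᵢ* = 0 < rᵢ`, making the claim trivial in that case.) -/
theorem stmt11 {n : ℕ} (CΩ : ℝ) (hC : 0 ≤ CΩ)
    (r rs b : Fin n → ℝ)
    (hr : ∀ i, 0 ≤ r i) (hrs : ∀ i, 0 ≤ rs i)
    (hconv : ∀ i, 0 < rs i ∨ r i = 0)
    (hb : ∀ i, 0 ≤ b i ∧ b i ≤ CΩ) :
    ∑ i, rs i * b i
      ≤ 3 * ∑ i, r i * b i
        + 2 * CΩ * ∑ i, (r i * Real.log (r i / rs i) - r i + rs i) :=
  stmt11_general CΩ r rs b hr hrs hconv hb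
end

section
/- For every integer d ≥ 1, a, b real, and nonnegative measure γ on Ω×Ω ⊆ ℝᵈ×ℝᵈ with first marginal γ₀, if dual potentials φ₀, ψ₀ satisfy the feasibility constraint φ₀(x) + ψ₀(y) ≤ ½‖x−y‖² for all (x,y), and ĝr, ĝs are the marginals of a plan γ̂, then the identity UOT-objective(γ̂; μ̂, ν̂) − ∫ζ₀ dμ̂ − ∫ξ₀ dν̂ = ∫(½‖x−y‖² − φ₀(x) − ψ₀(y)) dγ̂ + KL(ĝr | e^{−φ₀}μ̂) + KL(ĝs | e^{−ψ₀}ν̂) holds, where ζ₀ = 1 − e^{−φ₀}, ξ₀ = 1 − e^{−ψ₀}, and the UOT objective is ∫½‖x−y‖² dγ̂ + KL(ĝr | μ̂) + KL(ĝs | ν̂). In particular, the right-hand side is a sum of three nonnegative terms. -/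
open MeasureTheory Real

/-! Pointwise, `e^{-t} F(f e^t) = F(f) + t f + (e^{-t} - 1)` for `F(h) = h log h - h + 1`;
integrating this against `μ̂` and trading `∫ φ₀ fr dμ̂` for `∫ φ₀(x) dγ̂` through the
first marginal (and likewise on the target side) turns the UOT objective minus the dual
value into the stated sum. Its first term is nonnegative by dual feasibility, the other
two because `F ≥ 0`. -/

lemma mul_log_sub_add_one_nonneg {h : ℝ} (hh : 0 ≤ h) : 0 ≤ h * log h - h + 1 := by
  have := InformationTheory.klFun_nonneg hh
  rw [InformationTheory.klFun_apply] at this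
  linarith

lemma exp_neg_mul_kl_rescale {f : ℝ} (hf : 0 ≤ f) (t : ℝ) :
    exp (-t) * (f * exp t * log (f * exp t) - f * exp t + 1)
      = (f * log f - f + 1) + t * f + (exp (-t) - 1) := by
  rcases hf.eq_or_lt with rfl | hf
  · simp
  · have hexp : exp (-t) * exp t = 1 := by rw [← exp_add, neg_add_cancel, exp_zero]
    rw [log_mul hf.ne' (exp_ne_zero t), log_exp]
    linear_combination (f * (log f + t) - f) * hexp

lemma integral_exp_neg_mul_kl_rescale {α : Type*} [MeasurableSpace α]
    {μ : Measure α} [IsFiniteMeasure μ] {f t : α → ℝ} (hf0 : ∀ x, 0 ≤ f x)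
    (hF : Integrable (fun x => f x * log (f x) - f x + 1) μ)
    (hexp : Integrable (fun x => exp (-t x)) μ)
    (htf : Integrable (fun x => t x * f x) μ) :
    ∫ x, exp (-t x) * (f x * exp (t x) * log (f x * exp (t x)) - f x * exp (t x) + 1) ∂μ
      = (∫ x, (f x * log (f x) - f x + 1) ∂μ) + (∫ x, t x * f x ∂μ)
        - ∫ x, (1 - exp (-t x)) ∂μ := by
  simp_rw [exp_neg_mul_kl_rescale (hf0 _)]
  rw [integral_add (hF.fun_add htf) (hexp.sub' (integrable_const 1)), integral_add hF htf,
    integral_sub hexp (integrable_const 1), integral_sub (integrable_const 1) hexp]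
  ring

lemma integral_comp_of_map_eq_withDensity {α β : Type*} [MeasurableSpace α]
    [MeasurableSpace β] {γ : Measure α} {μ : Measure β} {T : α → β} {f g : β → ℝ}
    (hT : Measurable T) (hf : Measurable f) (hg : Measurable g) (hf0 : ∀ x, 0 ≤ f x)
    (hmap : γ.map T = μ.withDensity fun x => ENNReal.ofReal (f x)) :
    ∫ z, g (T z) ∂γ = ∫ x, g x * f x ∂μ := by
  rw [← integral_map hT.aemeasurable hg.aestronglyMeasurable, hmap]
  change ∫ x, g x ∂μ.withDensity (fun x => ((f x).toNNReal : ENNReal)) = _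
  rw [integral_withDensity_eq_integral_smul hf.real_toNNReal]
  simp [NNReal.smul_def, Real.coe_toNNReal _ (hf0 _), mul_comm]

theorem stmt15_general {d : ℕ}
    (μ ν : Measure (EuclideanSpace ℝ (Fin d)))
    [IsFiniteMeasure μ] [IsFiniteMeasure ν]
    (γ : Measure (EuclideanSpace ℝ (Fin d) × EuclideanSpace ℝ (Fin d)))
    (φ ψ : EuclideanSpace ℝ (Fin d) → ℝ)
    (hφm : Measurable φ) (hψm : Measurable ψ)
    (fr fs : EuclideanSpace ℝ (Fin d) → ℝ)
    (hfrm : Measurable fr) (hfsm : Measurable fs)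
    (hfr0 : ∀ x, 0 ≤ fr x) (hfs0 : ∀ y, 0 ≤ fs y)
    (hmarg1 : γ.map Prod.fst = μ.withDensity fun x => ENNReal.ofReal (fr x))
    (hmarg2 : γ.map Prod.snd = ν.withDensity fun y => ENNReal.ofReal (fs y))
    (hfeas : ∀ x y : EuclideanSpace ℝ (Fin d), φ x + ψ y ≤ ‖x - y‖ ^ 2 / 2)
    (hc : Integrable (fun z => ‖z.1 - z.2‖ ^ 2 / 2) γ)
    (hφγ : Integrable (fun z => φ z.1) γ)
    (hψγ : Integrable (fun z => ψ z.2) γ)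
    (hF1 : Integrable (fun x => fr x * Real.log (fr x) - fr x + 1) μ)
    (hF2 : Integrable (fun y => fs y * Real.log (fs y) - fs y + 1) ν)
    (hζ : Integrable (fun x => Real.exp (-φ x)) μ)
    (hξ : Integrable (fun y => Real.exp (-ψ y)) ν)
    (hφfr : Integrable (fun x => φ x * fr x) μ)
    (hψfs : Integrable (fun y => ψ y * fs y) ν) :
    ((∫ z, ‖z.1 - z.2‖ ^ 2 / 2 ∂γ)
        + (∫ x, (fr x * Real.log (fr x) - fr x + 1) ∂μ)
        + (∫ y, (fs y * Real.log (fs y) - fs y + 1) ∂ν))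
      - (∫ x, (1 - Real.exp (-φ x)) ∂μ) - (∫ y, (1 - Real.exp (-ψ y)) ∂ν)
    = (∫ z, (‖z.1 - z.2‖ ^ 2 / 2 - φ z.1 - ψ z.2) ∂γ)
      + (∫ x, Real.exp (-φ x) *
          (fr x * Real.exp (φ x) * Real.log (fr x * Real.exp (φ x))
            - fr x * Real.exp (φ x) + 1) ∂μ)
      + (∫ y, Real.exp (-ψ y) *
          (fs y * Real.exp (ψ y) * Real.log (fs y * Real.exp (ψ y))
            - fs y * Real.exp (ψ y) + 1) ∂ν)
    ∧ 0 ≤ ∫ z, (‖z.1 - z.2‖ ^ 2 / 2 - φ z.1 - ψ z.2) ∂γ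
    ∧ 0 ≤ ∫ x, Real.exp (-φ x) *
          (fr x * Real.exp (φ x) * Real.log (fr x * Real.exp (φ x))
            - fr x * Real.exp (φ x) + 1) ∂μ
    ∧ 0 ≤ ∫ y, Real.exp (-ψ y) *
          (fs y * Real.exp (ψ y) * Real.log (fs y * Real.exp (ψ y))
            - fs y * Real.exp (ψ y) + 1) ∂ν := by
  refine ⟨?_, integral_nonneg fun z => by
    simpa only [Pi.zero_apply, sub_sub, sub_nonneg] using hfeas z.1 z.2,
    integral_nonneg fun x => mul_nonneg (exp_nonneg _)
      (mul_log_sub_add_one_nonneg (mul_nonneg (hfr0 x) (exp_nonneg _))),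
    integral_nonneg fun y => mul_nonneg (exp_nonneg _)
      (mul_log_sub_add_one_nonneg (mul_nonneg (hfs0 y) (exp_nonneg _)))⟩
  rw [integral_exp_neg_mul_kl_rescale hfr0 hF1 hζ hφfr,
    integral_exp_neg_mul_kl_rescale hfs0 hF2 hξ hψfs,
    integral_sub (hc.sub' hφγ) hψγ, integral_sub hc hφγ,
    integral_comp_of_map_eq_withDensity (T := Prod.fst) measurable_fst hfrm hφm hfr0 hmarg1,
    integral_comp_of_map_eq_withDensity (T := Prod.snd) measurable_snd hfsm hψm hfs0 hmarg2]
  ring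

/-- Empirical UOT excess identity.  Let `μ̂, ν̂` be finite positive
measures on a bounded `Ω ⊆ ℝᵈ`, and let `γ̂` be a finite plan whose
marginals `ĝr, ĝs` have densities `fr, fs` with respect to `μ̂, ν̂`.
Let `(φ₀, ψ₀)` be dual potentials satisfying the feasibility constraint
`φ₀(x) + ψ₀(y) ≤ ½‖x − y‖²`, and set `ζ₀ = 1 − e^{−φ₀}`, `ξ₀ = 1 − e^{−ψ₀}`.
Then, writing `F(h) = h log h − h + 1`, the UOT objective satisfies
`[∫ ½‖x−y‖² dγ̂ + KL(ĝr|μ̂) + KL(ĝs|ν̂)] − ∫ζ₀ dμ̂ − ∫ξ₀ dν̂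
  = ∫ (½‖x−y‖² − φ₀(x) − ψ₀(y)) dγ̂ + KL(ĝr | e^{−φ₀}μ̂) + KL(ĝs | e^{−ψ₀}ν̂)`,
where `KL(ĝr | e^{−φ₀}μ̂) = ∫ e^{−φ₀}·F(fr·e^{φ₀}) dμ̂` (the density of
`ĝr` with respect to `e^{−φ₀}μ̂` is `fr·e^{φ₀}`); moreover each of the
three terms on the right-hand side is nonnegative. -/
theorem stmt15 {d : ℕ} (hd : 1 ≤ d)
    (Ω : Set (EuclideanSpace ℝ (Fin d))) (hΩ : Bornology.IsBounded Ω)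
    (μ ν : Measure (EuclideanSpace ℝ (Fin d)))
    [IsFiniteMeasure μ] [IsFiniteMeasure ν]
    (γ : Measure (EuclideanSpace ℝ (Fin d) × EuclideanSpace ℝ (Fin d)))
    [IsFiniteMeasure γ]
    (φ ψ : EuclideanSpace ℝ (Fin d) → ℝ)
    (hφm : Measurable φ) (hψm : Measurable ψ)
    (fr fs : EuclideanSpace ℝ (Fin d) → ℝ)
    (hfrm : Measurable fr) (hfsm : Measurable fs)
    (hfr0 : ∀ x, 0 ≤ fr x) (hfs0 : ∀ y, 0 ≤ fs y)
    (hmarg1 : γ.map Prod.fst = μ.withDensity fun x => ENNReal.ofReal (fr x))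
    (hmarg2 : γ.map Prod.snd = ν.withDensity fun y => ENNReal.ofReal (fs y))
    (hfeas : ∀ x y : EuclideanSpace ℝ (Fin d), φ x + ψ y ≤ ‖x - y‖ ^ 2 / 2)
    (hc : Integrable (fun z => ‖z.1 - z.2‖ ^ 2 / 2) γ)
    (hφγ : Integrable (fun z => φ z.1) γ)
    (hψγ : Integrable (fun z => ψ z.2) γ)
    (hF1 : Integrable (fun x => fr x * Real.log (fr x) - fr x + 1) μ)
    (hF2 : Integrable (fun y => fs y * Real.log (fs y) - fs y + 1) ν)
    (hζ : Integrable (fun x => Real.exp (-φ x)) μ)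
    (hξ : Integrable (fun y => Real.exp (-ψ y)) ν)
    (hφfr : Integrable (fun x => φ x * fr x) μ)
    (hψfs : Integrable (fun y => ψ y * fs y) ν) :
    ((∫ z, ‖z.1 - z.2‖ ^ 2 / 2 ∂γ)
        + (∫ x, (fr x * Real.log (fr x) - fr x + 1) ∂μ)
        + (∫ y, (fs y * Real.log (fs y) - fs y + 1) ∂ν))
      - (∫ x, (1 - Real.exp (-φ x)) ∂μ) - (∫ y, (1 - Real.exp (-ψ y)) ∂ν)
    = (∫ z, (‖z.1 - z.2‖ ^ 2 / 2 - φ z.1 - ψ z.2) ∂γ)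
      + (∫ x, Real.exp (-φ x) *
          (fr x * Real.exp (φ x) * Real.log (fr x * Real.exp (φ x))
            - fr x * Real.exp (φ x) + 1) ∂μ)
      + (∫ y, Real.exp (-ψ y) *
          (fs y * Real.exp (ψ y) * Real.log (fs y * Real.exp (ψ y))
            - fs y * Real.exp (ψ y) + 1) ∂ν)
    ∧ 0 ≤ ∫ z, (‖z.1 - z.2‖ ^ 2 / 2 - φ z.1 - ψ z.2) ∂γ
    ∧ 0 ≤ ∫ x, Real.exp (-φ x) *
          (fr x * Real.exp (φ x) * Real.log (fr x * Real.exp (φ x))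
            - fr x * Real.exp (φ x) + 1) ∂μ
    ∧ 0 ≤ ∫ y, Real.exp (-ψ y) *
          (fs y * Real.exp (ψ y) * Real.log (fs y * Real.exp (ψ y))
            - fs y * Real.exp (ψ y) + 1) ∂ν :=
  stmt15_general μ ν γ φ ψ hφm hψm fr fs hfrm hfsm hfr0 hfs0 hmarg1 hmarg2 hfeas hc hφγ hψγ hF1 hF2
    hζ hξ hφfr hψfs
end
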